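/- Model contraction: let W = (K, ≤, v) be a strict finitistic model with root r, A a formula, and let K_A be the set of nodes k ∈ K such that for every variable p occurring in A, if p is assertible in W then k ∈ v(p). For k ∈ K_A with r < k, let W|k be the two-node model ({r, k}, ≤', v') where r <' k and v'(p) = v(p) ∩ {r, k}. Then W|k is a strict finitistic model and for every such k: (i) A is assertible in W iff k forces A in W|k; (ii) A is valid in W iff r forces A in W|k. -/
import Mathlib


/-- Propositional formulas over a countably infinite set of variables (indexed by ℕ). -/
inductive Fm : Type
  | bot : Fm
  | var : ℕ → Fm
  | and : Fm → Fm → Fm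
  | or : Fm → Fm → Fm
  | imp : Fm → Fm → Fm

/-- ¬A abbreviates A → ⊥. -/
def Fm.neg (A : Fm) : Fm := Fm.imp A Fm.bot

/-- ¬¬A. -/
def Fm.dneg (A : Fm) : Fm := (Fm.imp A Fm.bot).imp Fm.bot

/-- A strict finitistic model: a rooted tree (a partial order with minimum whose
sets of predecessors are linearly ordered), finitely branching, all of whose
branches (chains) are of at most countable length, with an upward-closed valuation
satisfying the finite verification condition and the atomic prevalence condition. -/
structure SFModel where
  K : Type
  le : K → K → Prop
  le_refl : ∀ k, le k k
  le_antisymm : ∀ k l, le k l → le l k → k = l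
  le_trans : ∀ k l m, le k l → le l m → le k m
  root : K
  root_le : ∀ k, le root k
  pred_linear : ∀ k l m, le l k → le m k → le l m ∨ le m l
  finitely_branching :
    ∀ k, {l | le k l ∧ k ≠ l ∧ ∀ m, le k m → le m l → m = k ∨ m = l}.Finite
  branches_countable :
    ∀ C : Set K, (∀ x ∈ C, ∀ y ∈ C, le x y ∨ le y x) → C.Countable
  val : ℕ → Set K
  val_up : ∀ p k l, le k l → k ∈ val p → l ∈ val p
  fin_verif : ∀ k, {p | k ∈ val p}.Finite
  atomic_prev : ∀ p, (∃ k, k ∈ val p) → ∀ l, ∃ l', le l l' ∧ l' ∈ val p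

/-- Strict finitistic forcing at a node of a strict finitistic model. -/
def Force (W : SFModel) : W.K → Fm → Prop
  | _, Fm.bot => False
  | k, Fm.var p => k ∈ W.val p
  | k, Fm.and A B => Force W k A ∧ Force W k B
  | k, Fm.or A B => Force W k A ∨ Force W k B
  | k, Fm.imp A B =>
      ∀ k', W.le k k' → Force W k' A → ∃ k'', W.le k' k'' ∧ Force W k'' B

/-- A is valid in W: every node forces A. -/
def Valid (W : SFModel) (A : Fm) : Prop := ∀ k, Force W k A

/-- A is assertible in W: some node forces A. -/
def Assertible (W : SFModel) (A : Fm) : Prop := ∃ k, Force W k A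

/-- A is prevalent in W: above every node some node forces A. -/
def Prevalent (W : SFModel) (A : Fm) : Prop := ∀ k, ∃ k', W.le k k' ∧ Force W k' A

/-- The set of variables occurring in a formula. -/
def Fm.vars : Fm → Finset ℕ
  | Fm.bot => ∅
  | Fm.var p => {p}
  | Fm.and A B => A.vars ∪ B.vars
  | Fm.or A B => A.vars ∪ B.vars
  | Fm.imp A B => A.vars ∪ B.vars

/-- The order of the two-node frame {r, k} with r < k, where `false` is the root r
and `true` is the top node k. -/
def le2 (x y : Bool) : Prop := x = y ∨ (x = false ∧ y = true)

/-- Strict finitistic forcing on the two-node frame, where the valuation is given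
by `a p` (the root r = `false` forces p) and `b p` (the top k = `true` forces p). -/
def Force2 (a b : ℕ → Prop) : Bool → Fm → Prop
  | _, Fm.bot => False
  | false, Fm.var p => a p
  | true, Fm.var p => b p
  | x, Fm.and A B => Force2 a b x A ∧ Force2 a b x B
  | x, Fm.or A B => Force2 a b x A ∨ Force2 a b x B
  | x, Fm.imp A B =>
      ∀ y, le2 x y → Force2 a b y A → ∃ z, le2 y z ∧ Force2 a b z B


lemma force_mono (W : SFModel) : ∀ (A : Fm) (k l : W.K), W.le k l → Force W k A → Force W l A := by
  intro A
  induction A with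
  | bot => intro k l _ h; exact h.elim
  | var p => intro k l hkl h; exact W.val_up p k l hkl h
  | and A B ihA ihB => intro k l hkl h; exact ⟨ihA k l hkl h.1, ihB k l hkl h.2⟩
  | or A B ihA ihB =>
      intro k l hkl h
      rcases h with h | h
      · exact Or.inl (ihA k l hkl h)
      · exact Or.inr (ihB k l hkl h)
  | imp A B ihA ihB =>
      intro k l hkl h k' hk' hA
      exact h k' (W.le_trans _ _ _ hkl hk') hA

lemma assert_prev (W : SFModel) : ∀ A, Assertible W A → Prevalent W A := by
  intro A
  induction A with
  | bot => rintro ⟨m, hm⟩; exact hm.elim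
  | var p => rintro ⟨m, hm⟩ l; exact W.atomic_prev p ⟨m, hm⟩ l
  | and A B ihA ihB =>
      rintro ⟨m, hmA, hmB⟩ l
      obtain ⟨l', hl', hA⟩ := ihA ⟨m, hmA⟩ l
      obtain ⟨l'', hl'', hB⟩ := ihB ⟨m, hmB⟩ l'
      exact ⟨l'', W.le_trans _ _ _ hl' hl'', force_mono W A _ _ hl'' hA, hB⟩
  | or A B ihA ihB =>
      rintro ⟨m, hm⟩ l
      rcases hm with hm | hm
      · obtain ⟨l', hl', hA⟩ := ihA ⟨m, hm⟩ l
        exact ⟨l', hl', Or.inl hA⟩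
      · obtain ⟨l', hl', hB⟩ := ihB ⟨m, hm⟩ l
        exact ⟨l', hl', Or.inr hB⟩
  | imp A B ihA ihB =>
      rintro ⟨m, hm⟩ l
      refine ⟨l, W.le_refl l, ?_⟩
      intro l' _ hA
      obtain ⟨m', hmm', hA'⟩ := ihA ⟨l', hA⟩ m
      obtain ⟨m'', _, hB⟩ := hm m' hmm' hA'
      exact ihB ⟨m'', hB⟩ l'

lemma assert_and (W : SFModel) (A B : Fm) (hA : Assertible W A) (hB : Assertible W B) :
    Assertible W (Fm.and A B) := by
  obtain ⟨m, hm⟩ := hB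
  obtain ⟨m', hmm', hA'⟩ := assert_prev W A hA m
  exact ⟨m', hA', force_mono W B m m' hmm' hm⟩

lemma imp_valid_of (W : SFModel) (A B : Fm) (h : Assertible W A → Assertible W B) :
    Valid W (Fm.imp A B) := by
  intro l l' _ hA
  exact assert_prev W B (h ⟨l', hA⟩) l'

lemma assert_of_imp (W : SFModel) (A B : Fm) (h : Assertible W (Fm.imp A B))
    (hA : Assertible W A) : Assertible W B := by
  obtain ⟨m, hm⟩ := h
  obtain ⟨m', hmm', hA'⟩ := assert_prev W A hA m
  obtain ⟨m'', _, hB⟩ := hm m' hmm' hA'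
  exact ⟨m'', hB⟩

lemma valid_iff_root (W : SFModel) (A : Fm) : Valid W A ↔ Force W W.root A :=
  ⟨fun h => h _, fun h l => force_mono W A _ _ (W.root_le l) h⟩

lemma le2_true {y : Bool} (h : le2 true y) : y = true := by
  rcases h with h | ⟨h, _⟩
  · exact h.symm
  · exact absurd h (by simp)

lemma key (W : SFModel) (k : W.K) (hle : W.le W.root k) :
    ∀ A : Fm, (∀ p ∈ Fm.vars A, Assertible W (Fm.var p) → k ∈ W.val p) →
      (Assertible W A ↔
        Force2 (fun p => W.root ∈ W.val p) (fun p => k ∈ W.val p) true A) ∧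
      (Valid W A ↔
        Force2 (fun p => W.root ∈ W.val p) (fun p => k ∈ W.val p) false A) := by
  intro A
  induction A with
  | bot =>
      intro _
      exact ⟨⟨fun ⟨_, h⟩ => h, False.elim⟩, ⟨fun h => h W.root, False.elim⟩⟩
  | var p =>
      intro hKA
      constructor
      · exact ⟨fun h => hKA p (by simp [Fm.vars]) h, fun h => ⟨k, h⟩⟩
      · exact ⟨fun h => h W.root, fun h l => W.val_up p _ _ (W.root_le l) h⟩
  | and A B ihA ihB =>
      intro hKA
      obtain ⟨tA, fA⟩ := ihA (fun p hp => hKA p (Finset.mem_union_left _ hp))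
      obtain ⟨tB, fB⟩ := ihB (fun p hp => hKA p (Finset.mem_union_right _ hp))
      constructor
      · constructor
        · rintro ⟨m, hA, hB⟩
          exact ⟨tA.mp ⟨m, hA⟩, tB.mp ⟨m, hB⟩⟩
        · rintro ⟨h1, h2⟩
          exact assert_and W A B (tA.mpr h1) (tB.mpr h2)
      · constructor
        · intro h
          exact ⟨fA.mp (fun l => (h l).1), fB.mp (fun l => (h l).2)⟩
        · rintro ⟨h1, h2⟩ l
          exact ⟨fA.mpr h1 l, fB.mpr h2 l⟩
  | or A B ihA ihB =>
      intro hKA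
      obtain ⟨tA, fA⟩ := ihA (fun p hp => hKA p (Finset.mem_union_left _ hp))
      obtain ⟨tB, fB⟩ := ihB (fun p hp => hKA p (Finset.mem_union_right _ hp))
      constructor
      · constructor
        · rintro ⟨m, hm⟩
          rcases hm with hm | hm
          · exact Or.inl (tA.mp ⟨m, hm⟩)
          · exact Or.inr (tB.mp ⟨m, hm⟩)
        · rintro (h | h)
          · obtain ⟨m, hm⟩ := tA.mpr h
            exact ⟨m, Or.inl hm⟩
          · obtain ⟨m, hm⟩ := tB.mpr h
            exact ⟨m, Or.inr hm⟩
      · constructor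
        · intro h
          rcases h W.root with hr | hr
          · exact Or.inl (fA.mp ((valid_iff_root W A).mpr hr))
          · exact Or.inr (fB.mp ((valid_iff_root W B).mpr hr))
        · rintro (h | h) l
          · exact Or.inl (fA.mpr h l)
          · exact Or.inr (fB.mpr h l)
  | imp A B ihA ihB =>
      intro hKA
      obtain ⟨tA, fA⟩ := ihA (fun p hp => hKA p (Finset.mem_union_left _ hp))
      obtain ⟨tB, fB⟩ := ihB (fun p hp => hKA p (Finset.mem_union_right _ hp))
      have himp : ∀ y, le2 true y ∨ le2 false y := by
        intro y
        cases y
        · exact Or.inr (Or.inl rfl)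
        · exact Or.inl (Or.inl rfl)
      constructor
      · constructor
        · intro h y hy hyA
          have hy' := le2_true hy
          subst hy'
          have hB : Assertible W B := assert_of_imp W A B h (tA.mpr hyA)
          exact ⟨true, Or.inl rfl, tB.mp hB⟩
        · intro h
          have h' : Assertible W A → Assertible W B := by
            intro hA
            obtain ⟨z, hz, hB⟩ := h true (Or.inl rfl) (tA.mp hA)
            have hz' := le2_true hz
            subst hz'
            exact tB.mpr hB
          exact ⟨W.root, imp_valid_of W A B h' W.root⟩
      · have hab : Assertible W (Fm.imp A B) ↔ (Assertible W A → Assertible W B) :=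
          ⟨fun h hA => assert_of_imp W A B h hA, fun h => ⟨W.root, imp_valid_of W A B h W.root⟩⟩
        constructor
        · intro h y hy hyA
          have hA : Assertible W A := by
            cases y
            · exact ⟨W.root, fA.mpr hyA W.root⟩
            · exact tA.mpr hyA
          have hB : Assertible W B := assert_of_imp W A B ⟨W.root, h W.root⟩ hA
          refine ⟨true, ?_, tB.mp hB⟩
          cases y
          · exact Or.inr ⟨rfl, rfl⟩
          · exact Or.inl rfl
        · intro h
          have h' : Assertible W A → Assertible W B := by
            intro hA
            obtain ⟨z, hz, hB⟩ := h true (Or.inr ⟨rfl, rfl⟩) (tA.mp hA)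
            have hz' := le2_true hz
            subst hz'
            exact tB.mpr hB
          exact imp_valid_of W A B h'

/-- model contraction.  For k ∈ K_A with root < k, the two-node
contraction model W|k (root r = `false`, top k = `true`, valuation v restricted
to {r, k}) is a strict finitistic model; A is assertible in W iff k forces A in
W|k, and A is valid in W iff r forces A in W|k. -/
theorem model_contraction (W : SFModel) (A : Fm) (k : W.K)
    (hKA : ∀ p ∈ Fm.vars A, Assertible W (Fm.var p) → k ∈ W.val p)
    (hle : W.le W.root k) (hne : W.root ≠ k) :
    ((∀ p, W.root ∈ W.val p → k ∈ W.val p) ∧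
     (∀ p, (W.root ∈ W.val p ∨ k ∈ W.val p) → k ∈ W.val p) ∧
     {p | W.root ∈ W.val p}.Finite ∧ {p | k ∈ W.val p}.Finite) ∧
    (Assertible W A ↔
      Force2 (fun p => W.root ∈ W.val p) (fun p => k ∈ W.val p) true A) ∧
    (Valid W A ↔
      Force2 (fun p => W.root ∈ W.val p) (fun p => k ∈ W.val p) false A) := by
  refine ⟨⟨fun p h => W.val_up p _ _ hle h,
    fun p h => h.elim (fun h => W.val_up p _ _ hle h) id,
    W.fin_verif _, W.fin_verif _⟩, ?_, ?_⟩
  · exact (key W k hle A hKA).1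
  · exact (key W k hle A hKA).2
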